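/- arXiv:1308.3187 — 2 statements merged into one kernel-verified Lean document; each statement's English description precedes it below -/
import Mathlib

section
/- Let F_{z2} ⊆ F_{q2} ⊆ F_{p2} ⊆ F_{b2} and F_{z3} ⊆ F_{q3} ⊆ F_{p3} ⊆ F_{b3} be subcomplexes of an ungraded chain complex (C,d) satisfying F_{z3} = F_{p2}, F_{q3} ⊆ F_{b2}, and F_{b2} ⊆ F_{p3}. Then: (a) the assignment sending the class of x to the class of d(x) is a well-defined homomorphism d : S^{p3,z3}_{b3,q3} → S^{p2,z2}_{b2,q2}; (b) setting F_{b*} := F_{b2} + F_{p3}, the map S^{p2,z2}_{b2,q2} → S^{p2,z2}_{b*,q2} given by the identity on representatives is surjective, and its kernel equals im(d); consequently coker(d) is isomorphic to S^{p2,z2}_{b*,q2}. -/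
open Function

/-- The numerator subgroup `F_p ∩ d⁻¹(F_z)` of an S-term. -/
abbrev Snum {C : Type*} [AddCommGroup C] (d : C →+ C) (Fp Fz : AddSubgroup C) :
    AddSubgroup C := Fp ⊓ Fz.comap d

/-- The denominator subgroup `d(F_b) + F_q` of an S-term. -/
abbrev Sden {C : Type*} [AddCommGroup C] (d : C →+ C) (Fb Fq : AddSubgroup C) :
    AddSubgroup C := Fb.map d ⊔ Fq

/-- The S-term `S^{pz}_{bq} = (F_p ∩ d⁻¹(F_z)) / ((F_p ∩ d⁻¹(F_z)) ∩ (d(F_b) + F_q))`. -/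
abbrev Sterm {C : Type*} [AddCommGroup C] (d : C →+ C) (Fp Fz Fb Fq : AddSubgroup C) :=
  ↥(Snum d Fp Fz) ⧸ (Sden d Fb Fq).addSubgroupOf (Snum d Fp Fz)

/-- The class of an element `x ∈ F_p ∩ d⁻¹(F_z)` in the S-term. -/
def Scls {C : Type*} [AddCommGroup C] (d : C →+ C) (Fp Fz Fb Fq : AddSubgroup C)
    {x : C} (hx : x ∈ Snum d Fp Fz) : Sterm d Fp Fz Fb Fq :=
  QuotientAddGroup.mk ⟨x, hx⟩

/-!
The differential kills `d(F_{b3})` and maps `F_{q3}` into `d(F_{b2})`, so it descends to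
S-terms. Since `F_{b2} ⊆ F_{p3}`, the new boundary group is `d(F_{p3}) + F_{q2}`. If `x = d b + q`
lies in `F_{p2}` with `b ∈ F_{p3}` and `q ∈ F_{q2} ⊆ F_{p2}`, then `d b ∈ F_{p2} = F_{z3}`, so `b`
represents a class of `S^{p3,z3}_{b3,q3}` whose differential is the class of `x`.
-/

namespace Sterm

variable {C : Type*} [AddCommGroup C] {d : C →+ C}

theorem mem_Sden_iff {Fb Fq : AddSubgroup C} {x : C} :
    x ∈ Sden d Fb Fq ↔ ∃ b ∈ Fb, ∃ q ∈ Fq, d b + q = x := by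
  simp only [AddSubgroup.mem_sup, AddSubgroup.mem_map]
  constructor
  · rintro ⟨_, ⟨b, hb, rfl⟩, q, hq, rfl⟩
    exact ⟨b, hb, q, hq, rfl⟩
  · rintro ⟨b, hb, q, hq, rfl⟩
    exact ⟨d b, ⟨b, hb, rfl⟩, q, hq, rfl⟩

variable {Fp Fz Fb Fq : AddSubgroup C}

@[elab_as_elim]
theorem Scls_induction {P : Sterm d Fp Fz Fb Fq → Prop} (y : Sterm d Fp Fz Fb Fq)
    (h : ∀ x (hx : x ∈ Snum d Fp Fz), P (Scls d Fp Fz Fb Fq hx)) : P y :=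
  QuotientAddGroup.induction_on y fun x => h x x.2

theorem Scls_eq_zero_iff {x : C} (hx : x ∈ Snum d Fp Fz) :
    Scls d Fp Fz Fb Fq hx = 0 ↔ x ∈ Sden d Fb Fq :=
  (QuotientAddGroup.eq_zero_iff _).trans AddSubgroup.mem_addSubgroupOf

theorem Scls_eq_Scls_iff {x y : C} (hx : x ∈ Snum d Fp Fz) (hy : y ∈ Snum d Fp Fz) :
    Scls d Fp Fz Fb Fq hx = Scls d Fp Fz Fb Fq hy ↔ x - y ∈ Sden d Fb Fq :=
  QuotientAddGroup.eq_iff_sub_mem.trans AddSubgroup.mem_addSubgroupOf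

theorem d_mem_Snum (hd : ∀ x, d (d x) = 0) {Fp' Fz' : AddSubgroup C} (hzp : Fz ≤ Fp')
    {x : C} (hx : x ∈ Snum d Fp Fz) : d x ∈ Snum d Fp' Fz' :=
  ⟨hzp hx.2, show d (d x) ∈ Fz' by rw [hd]; exact Fz'.zero_mem⟩

def differential (hd : ∀ x, d (d x) = 0) {Fp' Fz' Fb' Fq' : AddSubgroup C} (hzp : Fz ≤ Fp')
    (hqb : Fq ≤ Fb') : Sterm d Fp Fz Fb Fq →+ Sterm d Fp' Fz' Fb' Fq' :=
  QuotientAddGroup.lift _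
    ((QuotientAddGroup.mk' _).comp ((d.comp (Snum d Fp Fz).subtype).codRestrict _
      fun x => d_mem_Snum hd hzp x.2)) <| by
    rintro ⟨x, hx⟩ hden
    obtain ⟨b, -, q, hq, rfl⟩ := mem_Sden_iff.1 (AddSubgroup.mem_addSubgroupOf.1 hden)
    refine (Scls_eq_zero_iff (d_mem_Snum hd hzp hx)).2 (mem_Sden_iff.2 ⟨q, hqb hq, 0, zero_mem _, ?_⟩)
    rw [map_add, hd, zero_add, add_zero]

theorem differential_Scls (hd : ∀ x, d (d x) = 0) {Fp' Fz' Fb' Fq' : AddSubgroup C}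
    (hzp : Fz ≤ Fp') (hqb : Fq ≤ Fb') {x : C} (hx : x ∈ Snum d Fp Fz) :
    differential hd hzp hqb (Scls d Fp Fz Fb Fq hx) =
      Scls d Fp' Fz' Fb' Fq' (d_mem_Snum hd hzp hx) :=
  rfl

def mapOfLE {Fb' : AddSubgroup C} (hb : Fb ≤ Fb') :
    Sterm d Fp Fz Fb Fq →+ Sterm d Fp Fz Fb' Fq :=
  QuotientAddGroup.map _ _ (AddMonoidHom.id _) <|
    AddSubgroup.addSubgroupOf_mono _ (sup_le_sup_right (AddSubgroup.map_mono hb) Fq)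

theorem mapOfLE_Scls {Fb' : AddSubgroup C} (hb : Fb ≤ Fb') {x : C} (hx : x ∈ Snum d Fp Fz) :
    mapOfLE hb (Scls d Fp Fz Fb Fq hx) = Scls d Fp Fz Fb' Fq hx :=
  rfl

theorem mapOfLE_surjective {Fb' : AddSubgroup C} (hb : Fb ≤ Fb') :
    Surjective (mapOfLE hb : Sterm d Fp Fz Fb Fq →+ Sterm d Fp Fz Fb' Fq) := by
  intro y
  induction y using Scls_induction with
  | h x hx => exact ⟨Scls d Fp Fz Fb Fq hx, mapOfLE_Scls hb hx⟩

theorem ker_mapOfLE_eq_range_differential (hd : ∀ x, d (d x) = 0)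
    {Fz2 Fq2 Fp2 Fb2 Fz3 Fq3 Fp3 Fb3 : AddSubgroup C} (hqp : Fq2 ≤ Fp2) (hzp : Fz3 = Fp2)
    (hqb : Fq3 ≤ Fb2) (hbp : Fb2 ≤ Fp3) :
    (mapOfLE le_sup_left : Sterm d Fp2 Fz2 Fb2 Fq2 →+ Sterm d Fp2 Fz2 (Fb2 ⊔ Fp3) Fq2).ker =
      (differential hd hzp.le hqb : Sterm d Fp3 Fz3 Fb3 Fq3 →+ _).range := by
  apply le_antisymm
  · intro y
    induction y using Scls_induction with
    | h x hx =>
      rw [AddMonoidHom.mem_ker, mapOfLE_Scls, Scls_eq_zero_iff, mem_Sden_iff]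
      rintro ⟨b, hb, q, hq, hbq⟩
      rw [sup_eq_right.2 hbp] at hb
      have hdb : d b = x - q := eq_sub_of_add_eq hbq
      have hbnum : b ∈ Snum d Fp3 Fz3 :=
        ⟨hb, show d b ∈ Fz3 from hzp ▸ hdb ▸ sub_mem hx.1 (hqp hq)⟩
      refine ⟨Scls d Fp3 Fz3 Fb3 Fq3 hbnum, ?_⟩
      rw [differential_Scls, Scls_eq_Scls_iff, hdb, sub_sub_cancel_left]
      exact neg_mem (AddSubgroup.mem_sup_right hq)
  · rintro _ ⟨z, rfl⟩
    induction z using Scls_induction with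
    | h w hw =>
      rw [AddMonoidHom.mem_ker, differential_Scls, mapOfLE_Scls, Scls_eq_zero_iff, mem_Sden_iff]
      exact ⟨w, AddSubgroup.mem_sup_right hw.1, 0, zero_mem _, add_zero _⟩

end Sterm

theorem statement3_general {C : Type*} [AddCommGroup C] (d : C →+ C) (hd : ∀ x : C, d (d x) = 0)
    (Fz2 Fq2 Fp2 Fb2 Fz3 Fq3 Fp3 Fb3 : AddSubgroup C)
    (h2 : Fq2 ≤ Fp2)
    (hA : Fz3 = Fp2) (hB : Fq3 ≤ Fb2) (hC : Fb2 ≤ Fp3) :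
    ∃ D : Sterm d Fp3 Fz3 Fb3 Fq3 →+ Sterm d Fp2 Fz2 Fb2 Fq2,
      (∀ (x : C) (hx : x ∈ Snum d Fp3 Fz3) (hdx : d x ∈ Snum d Fp2 Fz2),
        D (Scls d Fp3 Fz3 Fb3 Fq3 hx) = Scls d Fp2 Fz2 Fb2 Fq2 hdx) ∧
      ∃ π : Sterm d Fp2 Fz2 Fb2 Fq2 →+ Sterm d Fp2 Fz2 (Fb2 ⊔ Fp3) Fq2,
        (∀ (x : C) (hx : x ∈ Snum d Fp2 Fz2),
          π (Scls d Fp2 Fz2 Fb2 Fq2 hx) = Scls d Fp2 Fz2 (Fb2 ⊔ Fp3) Fq2 hx) ∧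
        Surjective π ∧ π.ker = D.range ∧
        Nonempty ((Sterm d Fp2 Fz2 Fb2 Fq2 ⧸ D.range) ≃+
          Sterm d Fp2 Fz2 (Fb2 ⊔ Fp3) Fq2) := by
  have hsurj := Sterm.mapOfLE_surjective (d := d) (Fp := Fp2) (Fz := Fz2) (Fq := Fq2)
    (le_sup_left : Fb2 ≤ Fb2 ⊔ Fp3)
  have hker := Sterm.ker_mapOfLE_eq_range_differential (Fz2 := Fz2) (Fb3 := Fb3) hd h2 hA hB hC
  refine ⟨_, fun x hx _ => Sterm.differential_Scls hd hA.le hB hx, _,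
    fun x hx => Sterm.mapOfLE_Scls le_sup_left hx, hsurj, hker, ?_⟩
  exact ⟨(QuotientAddGroup.quotientAddEquivOfEq hker.symm).trans
    (QuotientAddGroup.quotientKerEquivOfSurjective _ hsurj)⟩

/-- Under `F_{z3} = F_{p2}`, `F_{q3} ⊆ F_{b2}`, `F_{b2} ⊆ F_{p3}`,
the class of `x` ↦ class of `d x` is a well-defined homomorphism
`d : S^{p3,z3}_{b3,q3} → S^{p2,z2}_{b2,q2}`; with `F_{b*} := F_{b2} + F_{p3}` the map
`S^{p2,z2}_{b2,q2} → S^{p2,z2}_{b*,q2}` (identity on representatives) is surjective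
with kernel `im(d)`, so `coker(d) ≅ S^{p2,z2}_{b*,q2}`. -/
theorem statement3 {C : Type*} [AddCommGroup C] (d : C →+ C) (hd : ∀ x : C, d (d x) = 0)
    (Fz2 Fq2 Fp2 Fb2 Fz3 Fq3 Fp3 Fb3 : AddSubgroup C)
    (hFz2 : ∀ x ∈ Fz2, d x ∈ Fz2) (hFq2 : ∀ x ∈ Fq2, d x ∈ Fq2)
    (hFp2 : ∀ x ∈ Fp2, d x ∈ Fp2) (hFb2 : ∀ x ∈ Fb2, d x ∈ Fb2)
    (hFz3 : ∀ x ∈ Fz3, d x ∈ Fz3) (hFq3 : ∀ x ∈ Fq3, d x ∈ Fq3)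
    (hFp3 : ∀ x ∈ Fp3, d x ∈ Fp3) (hFb3 : ∀ x ∈ Fb3, d x ∈ Fb3)
    (h1 : Fz2 ≤ Fq2) (h2 : Fq2 ≤ Fp2) (h3 : Fp2 ≤ Fb2)
    (h4 : Fz3 ≤ Fq3) (h5 : Fq3 ≤ Fp3) (h6 : Fp3 ≤ Fb3)
    (hA : Fz3 = Fp2) (hB : Fq3 ≤ Fb2) (hC : Fb2 ≤ Fp3) :
    ∃ D : Sterm d Fp3 Fz3 Fb3 Fq3 →+ Sterm d Fp2 Fz2 Fb2 Fq2,
      (∀ (x : C) (hx : x ∈ Snum d Fp3 Fz3) (hdx : d x ∈ Snum d Fp2 Fz2),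
        D (Scls d Fp3 Fz3 Fb3 Fq3 hx) = Scls d Fp2 Fz2 Fb2 Fq2 hdx) ∧
      ∃ π : Sterm d Fp2 Fz2 Fb2 Fq2 →+ Sterm d Fp2 Fz2 (Fb2 ⊔ Fp3) Fq2,
        (∀ (x : C) (hx : x ∈ Snum d Fp2 Fz2),
          π (Scls d Fp2 Fz2 Fb2 Fq2 hx) = Scls d Fp2 Fz2 (Fb2 ⊔ Fp3) Fq2 hx) ∧
        Surjective π ∧ π.ker = D.range ∧
        Nonempty ((Sterm d Fp2 Fz2 Fb2 Fq2 ⧸ D.range) ≃+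
          Sterm d Fp2 Fz2 (Fb2 ⊔ Fp3) Fq2) :=
  statement3_general d hd Fz2 Fq2 Fp2 Fb2 Fz3 Fq3 Fp3 Fb3 h2 hA hB hC
end

section
/- Let E be an exact couple system over a bounded poset I, and let z ≤ p1 ≤ p2 ≤ p3 ≤ b in I. The maps ℓ : E^{p2}_{p1} → E^{p3}_{p1} and ℓ : E^{p3}_{p1} → E^{p3}_{p2} send kernels of the respective differentials d_{pqz} into kernels and images of the respective d_{bpq} into images, and hence induce homomorphisms S^{p2,z}_{b,p1} → S^{p3,z}_{b,p1} and S^{p3,z}_{b,p1} → S^{p3,z}_{b,p2}. The resulting sequence 0 → S^{p2,z}_{b,p1} → S^{p3,z}_{b,p1} → S^{p3,z}_{b,p2} → 0 is exact. -/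
open Function

universe u v

/-- An exact couple system over a bounded poset `I`: abelian groups `E^p_q` for `q ≤ p`,
functorial maps `ℓ`, boundary maps `k_{pq} : E^p_q → D_q` (where `D_p := E^p_⊥`), exact
triangles `D_q → D_p → E^p_q → D_q`, and naturality of `k`. -/
structure ExactCoupleSystem (I : Type u) [PartialOrder I] [BoundedOrder I] where
  /-- the abelian groups `E^p_q` -/
  E : ∀ p q : I, q ≤ p → AddCommGrpCat.{v}
  /-- the structure maps `ℓ : E^p_q → E^{p'}_{q'}` for `p ≤ p'`, `q ≤ q'` -/
  l : ∀ {p q p' q' : I} (h : q ≤ p) (h' : q' ≤ p'), p ≤ p' → q ≤ q' →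
      (E p q h →+ E p' q' h')
  /-- the boundary maps `k_{pq} : E^p_q → D_q` -/
  k : ∀ {p q : I} (h : q ≤ p), (E p q h →+ E q ⊥ bot_le)
  l_id : ∀ {p q : I} (h : q ≤ p), l h h le_rfl le_rfl = AddMonoidHom.id _
  l_comp : ∀ {p q p' q' p'' q'' : I} (h : q ≤ p) (h' : q' ≤ p') (h'' : q'' ≤ p'')
      (hp : p ≤ p') (hq : q ≤ q') (hp' : p' ≤ p'') (hq' : q' ≤ q''),
      (l h' h'' hp' hq').comp (l h h' hp hq) = l h h'' (hp.trans hp') (hq.trans hq')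
  exact_ij : ∀ {p q : I} (h : q ≤ p),
      (l (bot_le : (⊥ : I) ≤ q) (bot_le : (⊥ : I) ≤ p) h le_rfl).range =
        (l (bot_le : (⊥ : I) ≤ p) h le_rfl bot_le).ker
  exact_jk : ∀ {p q : I} (h : q ≤ p),
      (l (bot_le : (⊥ : I) ≤ p) h le_rfl bot_le).range = (k h).ker
  exact_ki : ∀ {p q : I} (h : q ≤ p),
      (k h).range = (l (bot_le : (⊥ : I) ≤ q) (bot_le : (⊥ : I) ≤ p) h le_rfl).ker
  k_nat : ∀ {p q p' q' : I} (h : q ≤ p) (h' : q' ≤ p') (hp : p ≤ p') (hq : q ≤ q'),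
      (l (bot_le : (⊥ : I) ≤ q) (bot_le : (⊥ : I) ≤ q') hq le_rfl).comp (k h) =
        (k h').comp (l h h' hp hq)

namespace ExactCoupleSystem

variable {I : Type u} [PartialOrder I] [BoundedOrder I] (X : ExactCoupleSystem.{u, v} I)

/-- `D_p := E^p_{−∞}`. -/
abbrev D (p : I) := X.E p ⊥ bot_le

/-- `i_{qp} : D_q → D_p`. -/
def i {q p : I} (h : q ≤ p) : X.D q →+ X.D p := X.l bot_le bot_le h le_rfl

/-- `j_{pq} : D_p → E^p_q`. -/
def j {q p : I} (h : q ≤ p) : X.D p →+ X.E p q h := X.l bot_le h le_rfl bot_le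

/-- The differential `d_{pqz} = j_{qz} ∘ k_{pq} : E^p_q → E^q_z`. -/
def dd {z q p : I} (hzq : z ≤ q) (hqp : q ≤ p) : X.E p q hqp →+ X.E q z hzq :=
  (X.j hzq).comp (X.k hqp)

/-- The S-term `S^{pz}_{bq} = ker(d_{pqz}) / im(d_{bpq})` of an exact couple system. -/
abbrev Sterm {z q p b : I} (hzq : z ≤ q) (hqp : q ≤ p) (hpb : p ≤ b) :=
  ↥(X.dd hzq hqp).ker ⧸ (X.dd hqp hpb).range.addSubgroupOf (X.dd hzq hqp).ker

/-- The class in `S^{pz}_{bq}` of an element `x ∈ ker(d_{pqz})`. -/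
def Scls {z q p b : I} (hzq : z ≤ q) (hqp : q ≤ p) (hpb : p ≤ b)
    {x : X.E p q hqp} (hx : x ∈ (X.dd hzq hqp).ker) : X.Sterm hzq hqp hpb :=
  QuotientAddGroup.mk ⟨x, hx⟩

end ExactCoupleSystem


/-! The maps `ℓ` commute with the differentials `d = j ∘ k` (naturality of `k` and functoriality
of `ℓ`), so they induce maps of S-terms. Exactness of the S-sequence is a diagram chase through
the exact triangles; its key input is the exactness of `E^{p2}_{p1} → E^{p3}_{p1} → E^{p3}_{p2}`,
which is again a chase, using that `E^p_p = 0`. -/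

namespace ExactCoupleSystem

variable {I : Type u} [PartialOrder I] [BoundedOrder I] (X : ExactCoupleSystem.{u, v} I)

lemma l_l_apply {p q p' q' p'' q'' : I} (h : q ≤ p) (h' : q' ≤ p') (h'' : q'' ≤ p'')
    (hp : p ≤ p') (hq : q ≤ q') (hp' : p' ≤ p'') (hq' : q' ≤ q'') (x : X.E p q h) :
    X.l h' h'' hp' hq' (X.l h h' hp hq x) = X.l h h'' (hp.trans hp') (hq.trans hq') x :=
  DFunLike.congr_fun (X.l_comp h h' h'' hp hq hp' hq') x

lemma l_id_apply {p q : I} (h : q ≤ p) (x : X.E p q h) : X.l h h le_rfl le_rfl x = x := by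
  rw [X.l_id]; rfl

lemma i_k {p q p' q' : I} (h : q ≤ p) (h' : q' ≤ p') (hp : p ≤ p') (hq : q ≤ q')
    (x : X.E p q h) : X.i hq (X.k h x) = X.k h' (X.l h h' hp hq x) :=
  DFunLike.congr_fun (X.k_nat h h' hp hq) x

lemma i_id_apply {p : I} (x : X.D p) : X.i le_rfl x = x := X.l_id_apply bot_le x

lemma i_i {p q r : I} (h : q ≤ p) (h' : p ≤ r) (x : X.D q) :
    X.i h' (X.i h x) = X.i (h.trans h') x :=
  X.l_l_apply bot_le bot_le bot_le h le_rfl h' le_rfl x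

lemma k_l_of_le {p q p' : I} (h : q ≤ p) (h' : q ≤ p') (hp : p ≤ p') (x : X.E p q h) :
    X.k h' (X.l h h' hp le_rfl x) = X.k h x :=
  (X.i_k h h' hp le_rfl x).symm.trans (X.i_id_apply _)

lemma l_j {p q p' q' : I} (h : q ≤ p) (h' : q' ≤ p') (hp : p ≤ p') (hq : q ≤ q')
    (x : X.D p) : X.l h h' hp hq (X.j h x) = X.j h' (X.i hp x) :=
  (X.l_l_apply bot_le h h' le_rfl bot_le hp hq x).trans
    (X.l_l_apply bot_le bot_le h' hp le_rfl le_rfl bot_le x).symm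

lemma dd_apply {z q p : I} (hzq : z ≤ q) (hqp : q ≤ p) (x : X.E p q hqp) :
    X.dd hzq hqp x = X.j hzq (X.k hqp x) := rfl

lemma exists_i_eq_of_j_eq_zero {p q : I} (h : q ≤ p) {x : X.D p} (hx : X.j h x = 0) :
    ∃ y, X.i h y = x :=
  (X.exact_ij h).ge hx

lemma j_i {p q : I} (h : q ≤ p) (y : X.D q) : X.j h (X.i h y) = 0 :=
  (X.exact_ij h).le ⟨y, rfl⟩

lemma exists_j_eq_of_k_eq_zero {p q : I} (h : q ≤ p) {x : X.E p q h} (hx : X.k h x = 0) :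
    ∃ y, X.j h y = x :=
  (X.exact_jk h).ge hx

lemma k_j {p q : I} (h : q ≤ p) (y : X.D p) : X.k h (X.j h y) = 0 :=
  (X.exact_jk h).le ⟨y, rfl⟩

lemma exists_k_eq_of_i_eq_zero {p q : I} (h : q ≤ p) {x : X.D q} (hx : X.i h x = 0) :
    ∃ y, X.k h y = x :=
  (X.exact_ki h).ge hx

lemma i_k_eq_zero {p q : I} (h : q ≤ p) (y : X.E p q h) : X.i h (X.k h y) = 0 :=
  (X.exact_ki h).le ⟨y, rfl⟩

lemma eq_zero_of_E_self {p : I} (x : X.E p p le_rfl) : x = 0 := by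
  have hk : X.k le_rfl x = 0 := (X.i_id_apply _).symm.trans (X.i_k_eq_zero le_rfl x)
  obtain ⟨y, rfl⟩ := X.exists_j_eq_of_k_eq_zero le_rfl hk
  rw [← X.i_id_apply y]
  exact X.j_i le_rfl y

/-- The composite `E^p_q → E^r_q → E^r_p` factors through `E^p_p = 0`. -/
lemma l_l_eq_zero {p q r : I} (hqp : q ≤ p) (hpr : p ≤ r) (x : X.E p q hqp) :
    X.l (hqp.trans hpr) hpr le_rfl hqp (X.l hqp (hqp.trans hpr) hpr le_rfl x) = 0 := by
  rw [X.l_l_apply, ← X.l_l_apply hqp le_rfl hpr le_rfl hqp hpr le_rfl,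
    X.eq_zero_of_E_self (X.l hqp le_rfl le_rfl hqp x), map_zero]

lemma exists_l_eq_of_l_eq_zero {p1 p2 p3 : I} (h12 : p1 ≤ p2) (h23 : p2 ≤ p3)
    {y : X.E p3 p1 (h12.trans h23)} (hy : X.l (h12.trans h23) h23 le_rfl h12 y = 0) :
    ∃ c : X.E p2 p1 h12, X.l h12 (h12.trans h23) h23 le_rfl c = y := by
  have hiky : X.i h12 (X.k (h12.trans h23) y) = 0 := by
    rw [X.i_k (h12.trans h23) h23 le_rfl h12 y, hy, map_zero]
  obtain ⟨c, hc⟩ := X.exists_k_eq_of_i_eq_zero h12 hiky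
  have hk : X.k (h12.trans h23) (y - X.l h12 (h12.trans h23) h23 le_rfl c) = 0 := by
    rw [map_sub, X.k_l_of_le, hc, sub_self]
  obtain ⟨a, ha⟩ := X.exists_j_eq_of_k_eq_zero (h12.trans h23) hk
  have hja : X.j h23 a = 0 := by
    rw [← X.i_id_apply a, ← X.l_j (h12.trans h23) h23 le_rfl h12, ha, map_sub, hy, X.l_l_eq_zero, sub_zero]
  obtain ⟨e, rfl⟩ := X.exists_i_eq_of_j_eq_zero h23 hja
  refine ⟨c + X.j h12 e, ?_⟩
  rw [map_add, X.l_j, ha]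
  abel

lemma dd_l {z q p z' q' p' : I} (hzq : z ≤ q) (hqp : q ≤ p) (hzq' : z' ≤ q') (hqp' : q' ≤ p')
    (hz : z ≤ z') (hq : q ≤ q') (hp : p ≤ p') (x : X.E p q hqp) :
    X.dd hzq' hqp' (X.l hqp hqp' hp hq x) = X.l hzq hzq' hq hz (X.dd hzq hqp x) := by
  rw [dd_apply, dd_apply, ← X.i_k, X.l_j]

lemma l_mem_ker_dd {z q p z' q' p' : I} (hzq : z ≤ q) (hqp : q ≤ p) (hzq' : z' ≤ q')
    (hqp' : q' ≤ p') (hz : z ≤ z') (hq : q ≤ q') (hp : p ≤ p') {x : X.E p q hqp}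
    (hx : x ∈ (X.dd hzq hqp).ker) : X.l hqp hqp' hp hq x ∈ (X.dd hzq' hqp').ker := by
  rw [AddMonoidHom.mem_ker, X.dd_l hzq hqp hzq' hqp' hz hq hp, hx, map_zero]

lemma l_mem_range_dd {q p b q' p' b' : I} (hqp : q ≤ p) (hpb : p ≤ b) (hqp' : q' ≤ p')
    (hpb' : p' ≤ b') (hq : q ≤ q') (hp : p ≤ p') (hb : b ≤ b') {x : X.E p q hqp}
    (hx : x ∈ (X.dd hqp hpb).range) : X.l hqp hqp' hp hq x ∈ (X.dd hqp' hpb').range := by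
  obtain ⟨y, rfl⟩ := hx
  exact ⟨X.l hpb hpb' hb hp y, X.dd_l hqp hpb hqp' hpb' hq hp hb y⟩

lemma Scls_eq_zero_iff {z q p b : I} (hzq : z ≤ q) (hqp : q ≤ p) (hpb : p ≤ b)
    {x : X.E p q hqp} (hx : x ∈ (X.dd hzq hqp).ker) :
    X.Scls hzq hqp hpb hx = 0 ↔ x ∈ (X.dd hqp hpb).range :=
  (QuotientAddGroup.eq_zero_iff _).trans AddSubgroup.mem_addSubgroupOf

lemma Scls_eq_Scls_iff {z q p b : I} (hzq : z ≤ q) (hqp : q ≤ p) (hpb : p ≤ b)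
    {x y : X.E p q hqp} (hx : x ∈ (X.dd hzq hqp).ker) (hy : y ∈ (X.dd hzq hqp).ker) :
    X.Scls hzq hqp hpb hx = X.Scls hzq hqp hpb hy ↔ -x + y ∈ (X.dd hqp hpb).range :=
  QuotientAddGroup.eq.trans AddSubgroup.mem_addSubgroupOf

lemma exists_Scls_eq {z q p b : I} {hzq : z ≤ q} {hqp : q ≤ p} {hpb : p ≤ b}
    (s : X.Sterm hzq hqp hpb) : ∃ (x : X.E p q hqp) (hx : x ∈ (X.dd hzq hqp).ker),
      X.Scls hzq hqp hpb hx = s := by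
  induction s using QuotientAddGroup.induction_on with
  | H x => exact ⟨x.1, x.2, rfl⟩

def Smap {z q p b z' q' p' b' : I} (hzq : z ≤ q) (hqp : q ≤ p) (hpb : p ≤ b)
    (hzq' : z' ≤ q') (hqp' : q' ≤ p') (hpb' : p' ≤ b')
    (hz : z ≤ z') (hq : q ≤ q') (hp : p ≤ p') (hb : b ≤ b') :
    X.Sterm hzq hqp hpb →+ X.Sterm hzq' hqp' hpb' :=
  QuotientAddGroup.map _ _
    (((X.l hqp hqp' hp hq).comp (X.dd hzq hqp).ker.subtype).codRestrict _
      fun x => X.l_mem_ker_dd hzq hqp hzq' hqp' hz hq hp x.2)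
    fun _ hx => X.l_mem_range_dd hqp hpb hqp' hpb' hq hp hb (AddSubgroup.mem_addSubgroupOf.mp hx)

lemma Smap_Scls {z q p b z' q' p' b' : I} (hzq : z ≤ q) (hqp : q ≤ p) (hpb : p ≤ b)
    (hzq' : z' ≤ q') (hqp' : q' ≤ p') (hpb' : p' ≤ b')
    (hz : z ≤ z') (hq : q ≤ q') (hp : p ≤ p') (hb : b ≤ b') {x : X.E p q hqp}
    (hx : x ∈ (X.dd hzq hqp).ker) :
    X.Smap hzq hqp hpb hzq' hqp' hpb' hz hq hp hb (X.Scls hzq hqp hpb hx) =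
      X.Scls hzq' hqp' hpb' (X.l_mem_ker_dd hzq hqp hzq' hqp' hz hq hp hx) :=
  rfl

section Extension

variable {z p1 p2 p3 b : I} (hz1 : z ≤ p1) (h12 : p1 ≤ p2) (h23 : p2 ≤ p3) (h3b : p3 ≤ b)

lemma mem_range_dd_of_l_mem_range_dd {x : X.E p2 p1 h12}
    (hx : X.l h12 (h12.trans h23) h23 le_rfl x ∈ (X.dd (h12.trans h23) h3b).range) :
    x ∈ (X.dd h12 (h23.trans h3b)).range := by
  obtain ⟨y, hy⟩ := hx
  rw [dd_apply] at hy
  have hkx : X.k h12 x = 0 := by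
    rw [← X.k_l_of_le h12 (h12.trans h23) h23 x, ← hy, X.k_j]
  obtain ⟨v, rfl⟩ := X.exists_j_eq_of_k_eq_zero h12 hkx
  have hj : X.j (h12.trans h23) (X.k h3b y - X.i h23 v) = 0 := by
    rw [map_sub, hy, X.l_j, sub_self]
  obtain ⟨w, hw⟩ := X.exists_i_eq_of_j_eq_zero (h12.trans h23) hj
  have hi : X.i (h23.trans h3b) (v + X.i h12 w) = 0 := by
    rw [← X.i_i h23 h3b, map_add, X.i_i h12 h23 w, hw, add_sub_cancel, X.i_k_eq_zero]
  obtain ⟨t, ht⟩ := X.exists_k_eq_of_i_eq_zero (h23.trans h3b) hi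
  exact ⟨t, by rw [dd_apply, ht, map_add, X.j_i, add_zero]⟩

lemma exists_mem_ker_dd_l_sub_mem_range_dd {y : X.E p3 p1 (h12.trans h23)}
    (hy : y ∈ (X.dd hz1 (h12.trans h23)).ker)
    (hly : X.l (h12.trans h23) h23 le_rfl h12 y ∈ (X.dd h23 h3b).range) :
    ∃ c ∈ (X.dd hz1 h12).ker,
      -X.l h12 (h12.trans h23) h23 le_rfl c + y ∈ (X.dd (h12.trans h23) h3b).range := by
  obtain ⟨t, ht⟩ := hly
  have hl : X.l (h12.trans h23) h23 le_rfl h12 (y - X.dd (h12.trans h23) h3b t) = 0 := by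
    rw [map_sub, dd_apply, X.l_j, X.i_id_apply, ← dd_apply, ht, sub_self]
  obtain ⟨c, hc⟩ := X.exists_l_eq_of_l_eq_zero h12 h23 hl
  refine ⟨c, ?_, t, by rw [hc]; abel⟩
  rw [AddMonoidHom.mem_ker, dd_apply, ← X.k_l_of_le h12 (h12.trans h23) h23 c, hc, map_sub,
    dd_apply, X.k_j, sub_zero, ← dd_apply]
  exact hy

lemma exists_mem_ker_dd_l_eq {x : X.E p3 p2 h23} (hx : x ∈ (X.dd (hz1.trans h12) h23).ker) :
    ∃ y ∈ (X.dd hz1 (h12.trans h23)).ker, X.l (h12.trans h23) h23 le_rfl h12 y = x := by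
  obtain ⟨s, hs⟩ := X.exists_i_eq_of_j_eq_zero (hz1.trans h12) hx
  have hs' : X.i h12 (X.i hz1 s) = X.k h23 x := by rw [X.i_i, hs]
  have hi : X.i (h12.trans h23) (X.i hz1 s) = 0 := by
    rw [← X.i_i h12 h23, hs', X.i_k_eq_zero]
  obtain ⟨y, hy⟩ := X.exists_k_eq_of_i_eq_zero (h12.trans h23) hi
  have hk : X.k h23 (x - X.l (h12.trans h23) h23 le_rfl h12 y) = 0 := by
    rw [map_sub, ← X.i_k, hy, hs', sub_self]
  obtain ⟨t, ht⟩ := X.exists_j_eq_of_k_eq_zero h23 hk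
  refine ⟨y + X.j (h12.trans h23) t, ?_, ?_⟩
  · rw [AddMonoidHom.mem_ker, dd_apply, map_add, X.k_j, add_zero, hy, X.j_i]
  · rw [map_add, X.l_j, X.i_id_apply, ht]
    abel

/-- `S^{p2,z}_{b,p1} → S^{p3,z}_{b,p1}` -/
abbrev extendTop : X.Sterm hz1 h12 (h23.trans h3b) →+ X.Sterm hz1 (h12.trans h23) h3b :=
  X.Smap hz1 h12 (h23.trans h3b) hz1 (h12.trans h23) h3b le_rfl le_rfl h23 le_rfl

/-- `S^{p3,z}_{b,p1} → S^{p3,z}_{b,p2}` -/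
abbrev raiseBottom : X.Sterm hz1 (h12.trans h23) h3b →+ X.Sterm (hz1.trans h12) h23 h3b :=
  X.Smap hz1 (h12.trans h23) h3b (hz1.trans h12) h23 h3b le_rfl h12 le_rfl le_rfl

lemma extendTop_injective : Injective (X.extendTop hz1 h12 h23 h3b) := by
  refine (injective_iff_map_eq_zero _).mpr fun s hs => ?_
  obtain ⟨x, hx, rfl⟩ := X.exists_Scls_eq s
  rw [Smap_Scls, Scls_eq_zero_iff] at hs
  exact (X.Scls_eq_zero_iff _ _ _ hx).mpr (X.mem_range_dd_of_l_mem_range_dd h12 h23 h3b hs)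

lemma range_extendTop_eq_ker_raiseBottom :
    (X.extendTop hz1 h12 h23 h3b).range = (X.raiseBottom hz1 h12 h23 h3b).ker := by
  ext s
  obtain ⟨y, hy, rfl⟩ := X.exists_Scls_eq s
  constructor
  · rintro ⟨s', hs'⟩
    obtain ⟨x, hx, rfl⟩ := X.exists_Scls_eq s'
    rw [AddMonoidHom.mem_ker, ← hs', Smap_Scls, Smap_Scls, Scls_eq_zero_iff,
      X.l_l_eq_zero]
    exact zero_mem _
  · intro hs
    rw [AddMonoidHom.mem_ker, Smap_Scls, Scls_eq_zero_iff] at hs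
    obtain ⟨c, hc, hcy⟩ := X.exists_mem_ker_dd_l_sub_mem_range_dd hz1 h12 h23 h3b hy hs
    exact ⟨X.Scls hz1 h12 (h23.trans h3b) hc, (X.Scls_eq_Scls_iff _ _ _ _ hy).mpr hcy⟩

lemma raiseBottom_surjective : Surjective (X.raiseBottom hz1 h12 h23 h3b) := by
  intro s
  obtain ⟨x, hx, rfl⟩ := X.exists_Scls_eq s
  obtain ⟨y, hy, rfl⟩ := X.exists_mem_ker_dd_l_eq hz1 h12 h23 hx
  exact ⟨X.Scls hz1 (h12.trans h23) h3b hy, rfl⟩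

end Extension

end ExactCoupleSystem

/-- Extensions: for `z ≤ p1 ≤ p2 ≤ p3 ≤ b`, the maps `ℓ` send kernels of
the differentials into kernels and images into images, hence induce homomorphisms
`S^{p2,z}_{b,p1} → S^{p3,z}_{b,p1}` and `S^{p3,z}_{b,p1} → S^{p3,z}_{b,p2}`, and
`0 → S^{p2,z}_{b,p1} → S^{p3,z}_{b,p1} → S^{p3,z}_{b,p2} → 0` is exact. -/
theorem statement10 {I : Type u} [PartialOrder I] [BoundedOrder I]
    (X : ExactCoupleSystem.{u, v} I) {z p1 p2 p3 b : I}
    (hz1 : z ≤ p1) (h12 : p1 ≤ p2) (h23 : p2 ≤ p3) (h3b : p3 ≤ b) :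
    (∀ x ∈ (X.dd hz1 h12).ker,
      X.l h12 (h12.trans h23) h23 le_rfl x ∈ (X.dd hz1 (h12.trans h23)).ker) ∧
    (∀ x ∈ (X.dd h12 (h23.trans h3b)).range,
      X.l h12 (h12.trans h23) h23 le_rfl x ∈ (X.dd (h12.trans h23) h3b).range) ∧
    (∀ x ∈ (X.dd hz1 (h12.trans h23)).ker,
      X.l (h12.trans h23) h23 le_rfl h12 x ∈ (X.dd (hz1.trans h12) h23).ker) ∧
    (∀ x ∈ (X.dd (h12.trans h23) h3b).range,
      X.l (h12.trans h23) h23 le_rfl h12 x ∈ (X.dd h23 h3b).range) ∧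
    ∃ (f : X.Sterm hz1 h12 (h23.trans h3b) →+ X.Sterm hz1 (h12.trans h23) h3b)
      (g : X.Sterm hz1 (h12.trans h23) h3b →+ X.Sterm (hz1.trans h12) h23 h3b),
      (∀ (x : X.E p2 p1 h12) (hx : x ∈ (X.dd hz1 h12).ker)
        (hx' : X.l h12 (h12.trans h23) h23 le_rfl x ∈ (X.dd hz1 (h12.trans h23)).ker),
        f (X.Scls hz1 h12 (h23.trans h3b) hx) = X.Scls hz1 (h12.trans h23) h3b hx') ∧
      (∀ (x : X.E p3 p1 (h12.trans h23)) (hx : x ∈ (X.dd hz1 (h12.trans h23)).ker)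
        (hx' : X.l (h12.trans h23) h23 le_rfl h12 x ∈ (X.dd (hz1.trans h12) h23).ker),
        g (X.Scls hz1 (h12.trans h23) h3b hx) = X.Scls (hz1.trans h12) h23 h3b hx') ∧
      Injective f ∧ f.range = g.ker ∧ Surjective g := by
  refine ⟨fun _ => X.l_mem_ker_dd hz1 h12 hz1 _ le_rfl le_rfl h23,
    fun _ => X.l_mem_range_dd h12 _ _ h3b le_rfl h23 le_rfl,
    fun _ => X.l_mem_ker_dd hz1 _ (hz1.trans h12) h23 le_rfl h12 le_rfl,
    fun _ => X.l_mem_range_dd _ h3b h23 h3b h12 le_rfl le_rfl,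
    X.extendTop hz1 h12 h23 h3b, X.raiseBottom hz1 h12 h23 h3b,
    fun _ _ _ => rfl, fun _ _ _ => rfl, X.extendTop_injective hz1 h12 h23 h3b,
    X.range_extendTop_eq_ker_raiseBottom hz1 h12 h23 h3b,
    X.raiseBottom_surjective hz1 h12 h23 h3b⟩
end
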